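/- arXiv:2401.00733 — 5 statements merged into one kernel-verified Lean document; each statement's English description precedes it below -/
import Mathlib

section
/- For all integers q ≥ 2, n ≥ 1, d ≥ 1 and every composition w̄ = (w_1,...,w_{q-1}) with w_1 ≥ 1 and w_1+···+w_{q-1} ≤ n, one has the Johnson-type recursion A_q(n,d,w̄) ≤ ⌊(n/w_1)·A_q(n-1,d,(w_1-1,w_2,...,w_{q-1}))⌋. -/
open Finset

/-- `compOf q n x j` is the number of coordinates of `x` equal to the symbol `j+1`,
for `j : Fin (q-1)`; i.e. the composition of `x` (indexed so that index `j`
corresponds to the symbol `j+1 ∈ {1,...,q-1}`). -/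
def compOf (q n : ℕ) (x : Fin n → ℕ) (j : Fin (q - 1)) : ℕ :=
  (univ.filter fun i => x i = (j : ℕ) + 1).card

/-- `C` is an `(n,d,w̄)_q` constant composition code: a code over the alphabet
`{0,...,q-1}` of length `n`, constant composition `wb`, and minimum Hamming
distance at least `d`. -/
def IsCCC (q n d : ℕ) (wb : Fin (q - 1) → ℕ) (C : Finset (Fin n → ℕ)) : Prop :=
  (∀ x ∈ C, ∀ i, x i < q) ∧ (∀ x ∈ C, ∀ j, compOf q n x j = wb j) ∧
  (∀ x ∈ C, ∀ y ∈ C, x ≠ y → d ≤ hammingDist x y)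

/-- `Aqc q n d wb` is the maximum size of an `(n,d,w̄)_q` constant composition code. -/
noncomputable def Aqc (q n d : ℕ) (wb : Fin (q - 1) → ℕ) : ℕ :=
  sSup {m | ∃ C : Finset (Fin n → ℕ), IsCCC q n d wb C ∧ C.card = m}

/-- `fComp q wb t` is the maximum of the multinomial coefficient `t!/(t₁!⋯t_{q-1}!)`
over all `(w̄,t)`-admissible vectors `t̄`, i.e. those with `∑ tᵢ = t` and `tᵢ ≤ wᵢ`. -/
noncomputable def fComp (q : ℕ) (wb : Fin (q - 1) → ℕ) (t : ℕ) : ℕ :=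
  sSup {m | ∃ tb : Fin (q - 1) → ℕ, (∑ j, tb j) = t ∧ (∀ j, tb j ≤ wb j) ∧
    Nat.multinomial Finset.univ tb = m}

/-- The multinomial coefficient `M(n) = n! / ((n-w)! ⬝ w₁! ⋯ w_{q-1}!)`, as a real number. -/
noncomputable def Mn (q n w : ℕ) (wb : Fin (q - 1) → ℕ) : ℝ :=
  (Nat.factorial n : ℝ) /
    ((Nat.factorial (n - w) : ℝ) * ∏ j, (Nat.factorial (wb j) : ℝ))

/-! Johnson's double counting. Shortening an `(n,d,w̄)_q` code `C` at a coordinate `i` on the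
symbol `1` gives an `(n-1,d,(w₁-1,w₂,…))_q` code, so at most `A' = A_q(n-1,d,(w₁-1,w₂,…))`
codewords of `C` carry a `1` in position `i`. Every codeword carries exactly `w₁` ones, so
counting the pairs (codeword, position of a `1`) gives `w₁ |C| ≤ n A'`. -/

theorem Fin.card_filter_univ_succAbove {m : ℕ} (i : Fin (m + 1)) (p : Fin (m + 1) → Prop)
    [DecidablePred p] :
    #{k | p k} = #{k | p (i.succAbove k)} + if p i then 1 else 0 := by
  simp only [card_filter, Fin.sum_univ_succAbove _ i, add_comm]

lemma hammingDist_removeNth {m : ℕ} {α : Type*} [DecidableEq α] (i : Fin (m + 1))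
    {x y : Fin (m + 1) → α} (hi : x i = y i) :
    hammingDist (Fin.removeNth i x) (Fin.removeNth i y) = hammingDist x y := by
  rw [hammingDist, hammingDist, Fin.card_filter_univ_succAbove i, if_neg (not_not.2 hi)]
  rfl

lemma compOf_removeNth {q m : ℕ} (i : Fin (m + 1)) (x : Fin (m + 1) → ℕ) (j : Fin (q - 1)) :
    compOf q m (Fin.removeNth i x) j = compOf q (m + 1) x j - if x i = j + 1 then 1 else 0 := by
  rw [compOf, compOf, Fin.card_filter_univ_succAbove i, Nat.add_sub_cancel]
  rfl

section Aqc

variable {q n d : ℕ} {wb : Fin (q - 1) → ℕ}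

lemma IsCCC.card_le {C : Finset (Fin n → ℕ)} (hC : IsCCC q n d wb C) : #C ≤ q ^ n := by
  have hsub : C ⊆ Fintype.piFinset fun _ => range q := fun x hx =>
    Fintype.mem_piFinset.2 fun i => mem_range.2 (hC.1 x hx i)
  simpa using card_le_card hsub

lemma IsCCC.card_le_Aqc {C : Finset (Fin n → ℕ)} (hC : IsCCC q n d wb C) :
    #C ≤ Aqc q n d wb :=
  le_csSup ⟨q ^ n, by rintro _ ⟨D, hD, rfl⟩; exact hD.card_le⟩ ⟨C, hC, rfl⟩

lemma Aqc_le {k : ℕ} (h : ∀ C : Finset (Fin n → ℕ), IsCCC q n d wb C → #C ≤ k) :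
    Aqc q n d wb ≤ k :=
  csSup_le ⟨0, ∅, by simp [IsCCC]⟩ (by rintro _ ⟨C, hC, rfl⟩; exact h C hC)

lemma sum_card_filter_eq_card_mul {C : Finset (Fin n → ℕ)} (j : Fin (q - 1))
    (hC : ∀ x ∈ C, compOf q n x j = wb j) :
    ∑ i, #{x ∈ C | x i = (j : ℕ) + 1} = #C * wb j := by
  simp only [card_filter]
  rw [sum_comm, ← smul_eq_mul, ← sum_const]
  refine sum_congr rfl fun x hx => ?_
  rw [← hC x hx, compOf, card_filter]

end Aqc

def shorten {m : ℕ} (i : Fin (m + 1)) (a : ℕ) (C : Finset (Fin (m + 1) → ℕ)) :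
    Finset (Fin m → ℕ) :=
  {x ∈ C | x i = a}.image (Fin.removeNth i)

section shorten

variable {q m d : ℕ} {wb : Fin (q - 1) → ℕ} {C : Finset (Fin (m + 1) → ℕ)}

lemma card_shorten (i : Fin (m + 1)) (a : ℕ) : #(shorten i a C) = #{x ∈ C | x i = a} := by
  refine card_image_of_injOn fun x hx y hy hxy => ?_
  simp only [mem_coe, mem_filter] at hx hy
  rw [← Fin.insertNth_self_removeNth i x, ← Fin.insertNth_self_removeNth i y, hxy, hx.2, hy.2]

lemma IsCCC.shorten (hC : IsCCC q (m + 1) d wb C) (i : Fin (m + 1)) (j : Fin (q - 1)) :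
    IsCCC q m d (Function.update wb j (wb j - 1)) (shorten i (j + 1) C) := by
  simp only [_root_.shorten, IsCCC, forall_mem_image, mem_filter, and_imp]
  refine ⟨fun x hx _ k => hC.1 x hx _, fun x hx hxi k => ?_, fun x hx hxi y hy hyi hne => ?_⟩
  · rw [compOf_removeNth, hC.2.1 x hx, hxi, Function.update_apply]
    by_cases hk : k = j
    · simp [hk]
    · simp [hk, Fin.val_inj, Ne.symm hk]
  · rw [hammingDist_removeNth i (hxi.trans hyi.symm)]
    exact hC.2.2 x hx y hy (by rintro rfl; exact hne rfl)

end shorten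

theorem IsCCC.card_mul_le {q n d : ℕ} {wb : Fin (q - 1) → ℕ} {C : Finset (Fin n → ℕ)}
    (hC : IsCCC q n d wb C) (j : Fin (q - 1)) :
    #C * wb j ≤ n * Aqc q (n - 1) d (Function.update wb j (wb j - 1)) := by
  have hcount := sum_card_filter_eq_card_mul j (hC.2.1 · · j)
  cases n with
  | zero => simp [← hcount]
  | succ m =>
    calc #C * wb j = ∑ i, #{x ∈ C | x i = (j : ℕ) + 1} := hcount.symm
      _ ≤ ∑ _i : Fin (m + 1), Aqc q m d (Function.update wb j (wb j - 1)) :=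
        sum_le_sum fun i _ => card_shorten (C := C) i (j + 1) ▸ (hC.shorten i j).card_le_Aqc
      _ = (m + 1) * Aqc q m d (Function.update wb j (wb j - 1)) := by simp

theorem stmt5 (q n d : ℕ) (wb : Fin (q - 1) → ℕ) (hq : 2 ≤ q)
    (hw1 : 1 ≤ wb ⟨0, by omega⟩) :
    Aqc q n d wb ≤
      Nat.floor (((n : ℝ) / (wb ⟨0, by omega⟩ : ℝ)) *
        (Aqc q (n - 1) d
          (Function.update wb ⟨0, by omega⟩ (wb ⟨0, by omega⟩ - 1)) : ℝ)) := by
  refine Aqc_le fun C hC => Nat.le_floor ?_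
  have hw1_pos : (0 : ℝ) < wb ⟨0, by omega⟩ := by exact_mod_cast hw1
  rw [div_mul_eq_mul_div, le_div_iff₀ hw1_pos]
  exact_mod_cast hC.card_mul_le ⟨0, by omega⟩
end

section
/- Let q ≥ 2, w ≥ 1 and d be integers with d odd and 1 ≤ d ≤ 2w-1, and set t = (2w-d+1)/2. Then for every integer n ≥ w one has A_q(n,d,w) ≤ (q-1)^t·C(n,t)/C(w,t), where C(a,b) denotes the binomial coefficient. -/
open Finset

/-- The weight of a vector: the number of nonzero coordinates. -/
def wtv {n : ℕ} (x : Fin n → ℕ) : ℕ := (univ.filter fun i => x i ≠ 0).card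

/-- `C` is an `(n,d,w)_q` constant weight code: a code over the alphabet `{0,...,q-1}`
of length `n`, constant weight `w`, and minimum Hamming distance at least `d`. -/
def IsCWC (q n d w : ℕ) (C : Finset (Fin n → ℕ)) : Prop :=
  (∀ x ∈ C, ∀ i, x i < q) ∧ (∀ x ∈ C, wtv x = w) ∧
  (∀ x ∈ C, ∀ y ∈ C, x ≠ y → d ≤ hammingDist x y)

/-- `Aq q n d w` is the maximum size of an `(n,d,w)_q` constant weight code. -/
noncomputable def Aq (q n d w : ℕ) : ℕ :=
  sSup {m | ∃ C : Finset (Fin n → ℕ), IsCWC q n d w C ∧ C.card = m}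

/-!
A packing argument. Restricting a codeword `x` to a `t`-subset of its support gives `C(w, t)`
words of weight `t`. If two codewords `x ≠ y` shared such a restriction, they would agree on `t`
common nonzero coordinates, so `d(x, y) ≤ 2w - 2t = d - 1`. Hence the restrictions of distinct
codewords are distinct, and there are at most `(q - 1)^t C(n, t)` `q`-ary words of weight `t`.
-/

section Packing

variable {n : ℕ}

def vsupport (x : Fin n → ℕ) : Finset (Fin n) := univ.filter fun i => x i ≠ 0

lemma wtv_eq_card_vsupport (x : Fin n → ℕ) : wtv x = #(vsupport x) := rfl

lemma mem_vsupport {x : Fin n → ℕ} {i : Fin n} : i ∈ vsupport x ↔ x i ≠ 0 := by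
  simp [vsupport]

lemma vsupport_piecewise_zero {S : Finset (Fin n)} {x : Fin n → ℕ} (hS : S ⊆ vsupport x) :
    vsupport (S.piecewise x 0) = S := by
  ext i
  by_cases hi : i ∈ S
  · simpa [mem_vsupport, hi] using mem_vsupport.1 (hS hi)
  · simp [mem_vsupport, hi]

lemma hammingDist_add_two_mul_card_le {S : Finset (Fin n)} {x y : Fin n → ℕ}
    (hSx : S ⊆ vsupport x) (hxy : ∀ i ∈ S, x i = y i) :
    hammingDist x y + 2 * #S ≤ wtv x + wtv y := by
  have hSy : S ⊆ vsupport y := fun i hi =>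
    mem_vsupport.2 (hxy i hi ▸ mem_vsupport.1 (hSx hi))
  have hdiff : (univ.filter fun i => x i ≠ y i) ⊆ (vsupport x ∪ vsupport y) \ S := by
    intro i hi
    simp only [mem_filter, mem_univ, true_and] at hi
    simp only [mem_sdiff, mem_union, mem_vsupport]
    exact ⟨by omega, fun hiS => hi (hxy i hiS)⟩
  have hdist := card_le_card hdiff
  have hsdiff := card_sdiff_add_card_eq_card (hSx.trans subset_union_left : S ⊆ _ ∪ vsupport y)
  have hunion := card_union_add_card_inter (vsupport x) (vsupport y)
  have hinter := card_le_card (subset_inter hSx hSy)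
  rw [hammingDist, wtv_eq_card_vsupport, wtv_eq_card_vsupport]
  omega


def qaryWordsOfWeight (q n t : ℕ) : Finset (Fin n → ℕ) :=
  (Fintype.piFinset fun _ => range q).filter fun v => wtv v = t

lemma card_qaryWordsOfWeight_le (q n t : ℕ) :
    #(qaryWordsOfWeight q n t) ≤ (q - 1) ^ t * n.choose t := by
  set words : Finset (Fin n) → Finset (Fin n → ℕ) := fun S =>
    Fintype.piFinset fun i => if i ∈ S then Ico 1 q else {0}
  have hcover : qaryWordsOfWeight q n t ⊆ (powersetCard t univ).biUnion words := by
    intro v hv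
    simp only [qaryWordsOfWeight, mem_filter, Fintype.mem_piFinset, mem_range] at hv
    refine mem_biUnion.2 ⟨vsupport v, mem_powersetCard.2 ⟨subset_univ _, hv.2⟩, ?_⟩
    refine Fintype.mem_piFinset.2 fun i => ?_
    by_cases hi : v i = 0
    · simp [mem_vsupport, hi]
    · simpa [mem_vsupport, hi] using ⟨Nat.one_le_iff_ne_zero.2 hi, hv.1 i⟩
  have hwords : ∀ S ∈ powersetCard t (univ : Finset (Fin n)), #(words S) = (q - 1) ^ t := by
    intro S hS
    simp only [words, Fintype.card_piFinset, apply_ite card, Nat.card_Ico, card_singleton,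
      prod_ite_mem, univ_inter, prod_const, (mem_powersetCard.1 hS).2]
  calc #(qaryWordsOfWeight q n t)
      ≤ ∑ S ∈ powersetCard t univ, #(words S) := (card_le_card hcover).trans card_biUnion_le
    _ = (q - 1) ^ t * n.choose t := by
      rw [sum_congr rfl hwords, sum_const, card_powersetCard, card_univ, Fintype.card_fin,
        smul_eq_mul, mul_comm]

variable {q d w t : ℕ} {C : Finset (Fin n → ℕ)}

lemma IsCWC.eq_of_piecewise_eq (hC : IsCWC q n d w C) (hdt : 2 * w < d + 2 * t)
    {x y : Fin n → ℕ} (hx : x ∈ C) (hy : y ∈ C) {S T : Finset (Fin n)}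
    (hSx : S ⊆ vsupport x) (hTy : T ⊆ vsupport y) (hS : #S = t)
    (h : S.piecewise x 0 = T.piecewise y 0) : x = y ∧ S = T := by
  have hST : S = T := by
    rw [← vsupport_piecewise_zero hSx, ← vsupport_piecewise_zero hTy, h]
  subst hST
  refine ⟨by_contra fun hne => ?_, rfl⟩
  have hagree : ∀ i ∈ S, x i = y i := fun i hi => by
    simpa [piecewise_eq_of_mem _ _ _ hi] using congrFun h i
  have hfar := hC.2.2 x hx y hy hne
  have hnear := hammingDist_add_two_mul_card_le hSx hagree
  rw [hC.2.1 x hx, hC.2.1 y hy, hS] at hnear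
  omega

lemma IsCWC.card_mul_choose_le (hq : 0 < q) (hC : IsCWC q n d w C)
    (hdt : 2 * w < d + 2 * t) : #C * w.choose t ≤ (q - 1) ^ t * n.choose t := by
  let restrictions := C.sigma fun x => powersetCard t (vsupport x)
  have hmaps : ∀ p ∈ restrictions, p.2.piecewise p.1 0 ∈ qaryWordsOfWeight q n t := by
    rintro ⟨x, S⟩ hp
    obtain ⟨hx, hSx, hS⟩ : x ∈ C ∧ S ⊆ vsupport x ∧ #S = t := by
      simpa [restrictions, mem_powersetCard] using hp
    refine mem_filter.2 ⟨Fintype.mem_piFinset.2 fun i => ?_, ?_⟩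
    · by_cases hi : i ∈ S <;> simp [hi, hC.1 x hx i, hq]
    · rw [wtv_eq_card_vsupport, vsupport_piecewise_zero hSx, hS]
  have hinj : Set.InjOn (fun p : Σ _ : Fin n → ℕ, Finset (Fin n) => p.2.piecewise p.1 0)
      restrictions := by
    rintro ⟨x, S⟩ hp ⟨y, T⟩ hp' h
    simp only [restrictions, coe_sigma, Set.mem_sigma_iff, mem_coe, mem_powersetCard] at hp hp'
    obtain ⟨rfl, rfl⟩ := hC.eq_of_piecewise_eq hdt hp.1 hp'.1 hp.2.1 hp'.2.1 hp.2.2 h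
    rfl
  calc #C * w.choose t = #restrictions := by
        rw [card_sigma, sum_congr rfl fun x hx => by
          rw [card_powersetCard, ← wtv_eq_card_vsupport, hC.2.1 x hx], sum_const, smul_eq_mul]
    _ ≤ #(qaryWordsOfWeight q n t) := card_le_card_of_injOn _ hmaps hinj
    _ ≤ (q - 1) ^ t * n.choose t := card_qaryWordsOfWeight_le q n t

lemma Aq_le_of_forall_card_le {m : ℕ} (h : ∀ C, IsCWC q n d w C → #C ≤ m) :
    Aq q n d w ≤ m :=
  csSup_le ⟨0, ∅, ⟨by simp, by simp, by simp⟩, rfl⟩ fun _ ⟨C, hC, hcard⟩ => hcard ▸ h C hC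

end Packing

theorem stmt6_general (q w d t : ℕ) (hq : 2 ≤ q) (ht : 2 * t = 2 * w - d + 1) :
    ∀ n : ℕ, w ≤ n →
      (Aq q n d w : ℝ) ≤ ((q : ℝ) - 1) ^ t * (Nat.choose n t : ℝ) / (Nat.choose w t : ℝ) := by
  intro n _
  -- `ht` rules out `2 * w < d`, where the truncated subtraction would give `2 * t = 1`.
  have hdt : 2 * w < d + 2 * t := by omega
  have hchoose : 0 < w.choose t := Nat.choose_pos (by omega)
  have hAq : Aq q n d w * w.choose t ≤ (q - 1) ^ t * n.choose t := by
    rw [← Nat.le_div_iff_mul_le hchoose]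
    exact Aq_le_of_forall_card_le fun C hC =>
      (Nat.le_div_iff_mul_le hchoose).2 (hC.card_mul_choose_le (by omega) hdt)
  rw [le_div_iff₀ (by exact_mod_cast hchoose), ← Nat.cast_pred (by omega)]
  exact_mod_cast hAq

theorem stmt6 (q w d t : ℕ) (hq : 2 ≤ q) (hw : 1 ≤ w) (hodd : Odd d)
    (hd1 : 1 ≤ d) (hd2 : d ≤ 2 * w - 1) (ht : 2 * t = 2 * w - d + 1) :
    ∀ n : ℕ, w ≤ n →
      (Aq q n d w : ℝ) ≤ ((q : ℝ) - 1) ^ t * (Nat.choose n t : ℝ) / (Nat.choose w t : ℝ) :=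
  stmt6_general q w d t hq ht
end

section
/- Let q ≥ 2 and d be integers with d odd, let w̄ = (w_1,...,w_{q-1}) be a composition with w = w_1+···+w_{q-1} ≥ 1 and 1 ≤ d ≤ 2w-1, and set t = (2w-d+1)/2. Then for all sufficiently large integers n one has A_q(n,d,w̄) ≤ M(n)/(C(n-t,w-t)·f(w̄,w-t)), where M(n) = n!/((n-w)!·w_1!···w_{q-1}!) is the multinomial coefficient and C(a,b) denotes the binomial coefficient. -/
open Finset

lemma exists_comp' {m : ℕ} (wb : Fin m → ℕ) (c : ℕ) (hc : c ≤ ∑ j, wb j) :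
    ∃ tb : Fin m → ℕ, (∑ j, tb j) = c ∧ ∀ j, tb j ≤ wb j := by
  classical
  induction c with
  | zero => exact ⟨0, by simp, by simp⟩
  | succ c ih =>
    obtain ⟨tb, hsum, hle⟩ := ih (by omega)
    have hex : ∃ j, tb j < wb j := by
      by_contra h
      push_neg at h
      have := Finset.sum_le_sum (fun j (_ : j ∈ univ) => h j)
      omega
    obtain ⟨j, hj⟩ := hex
    refine ⟨Function.update tb j (tb j + 1), ?_, ?_⟩
    · rw [Finset.sum_update_of_mem (mem_univ j)]
      have h2 := Finset.add_sum_erase univ tb (mem_univ j)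
      rw [← Finset.sdiff_singleton_eq_erase] at h2
      omega
    · intro k
      rcases eq_or_ne k j with rfl | hk
      · simp; omega
      · simp [Function.update, hk]; exact hle k

lemma descFactorial_pos' {n k : ℕ} (h : k ≤ n) : 0 < n.descFactorial k :=
  Nat.pos_of_ne_zero (fun h0 => absurd (Nat.descFactorial_eq_zero_iff_lt.1 h0) (not_lt.2 h))

lemma core {q n : ℕ} (d w t : ℕ) (wb sb : Fin (q-1) → ℕ)
    (hw : w = ∑ j, wb j) (hst : ∑ j, sb j = t)
    (hlt : 2 * (w - t) < d)
    (C : Finset (Fin n → ℕ)) (hC : IsCCC q n d wb C) :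
    C.card * ∏ j, (wb j).descFactorial (sb j) ≤ n.descFactorial t := by
  classical
  set T := (Σ j : Fin (q-1), Fin (sb j)) with hTdef
  have hT : Fintype.card T = t := by simp [hTdef, hst]
  set Ex : (Fin n → ℕ) → Finset (T ↪ Fin n) :=
    fun x => univ.filter (fun E => ∀ k : T, x (E k) = (k.1 : ℕ) + 1) with hExdef
  -- Step A
  have stepA : ∀ x ∈ C, ∏ j, (wb j).descFactorial (sb j) ≤ (Ex x).card := by
    intro x hx
    have hcomp := hC.2.1 x hx
    have fibcard : ∀ j : Fin (q-1), Fintype.card {i : Fin n // x i = (j:ℕ)+1} = wb j := by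
      intro j
      rw [Fintype.card_subtype]
      exact hcomp j
    set Φ : (∀ j : Fin (q-1), Fin (sb j) ↪ {i : Fin n // x i = (j:ℕ)+1}) → (T ↪ Fin n) :=
      fun F => ⟨fun k => (F k.1 k.2).1, by
        rintro ⟨j1, k1⟩ ⟨j2, k2⟩ h
        simp only at h
        have h1 := (F j1 k1).2
        have h2 := (F j2 k2).2
        rw [h, h2] at h1
        have hj : j1 = j2 := Fin.ext (by omega)
        subst hj
        have : k1 = k2 := (F j1).injective (Subtype.ext h)
        rw [this]⟩ with hΦdef
    have hΦmem : ∀ F, Φ F ∈ Ex x := by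
      intro F
      simp only [hExdef, mem_filter, mem_univ, true_and]
      rintro ⟨j, k⟩
      exact (F j k).2
    have hΦinj : Function.Injective (fun F => (⟨Φ F, hΦmem F⟩ : {E // E ∈ Ex x})) := by
      intro F G h
      have h' : Φ F = Φ G := congrArg Subtype.val h
      funext j
      apply Function.Embedding.ext
      intro k
      apply Subtype.ext
      exact DFunLike.congr_fun h' ⟨j, k⟩
    have hcardle := Fintype.card_le_of_injective _ hΦinj
    rw [Fintype.card_coe] at hcardle
    calc ∏ j, (wb j).descFactorial (sb j)
        = Fintype.card (∀ j : Fin (q-1), Fin (sb j) ↪ {i : Fin n // x i = (j:ℕ)+1}) := by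
          rw [Fintype.card_pi]
          refine (Finset.prod_congr rfl ?_).symm
          intro j _
          rw [Fintype.card_embedding_eq, Fintype.card_fin, fibcard j]
      _ ≤ (Ex x).card := hcardle
  -- support cardinality
  have suppcard : ∀ x ∈ C, (univ.filter fun i => x i ≠ 0).card = w := by
    intro x hx
    have hval := hC.1 x hx
    have : (univ.filter fun i => x i ≠ 0)
        = univ.biUnion (fun j : Fin (q-1) => univ.filter fun i => x i = (j:ℕ)+1) := by
      ext i
      simp only [mem_filter, mem_univ, true_and, mem_biUnion]
      constructor
      · intro h0
        exact ⟨⟨x i - 1, by have := hval i; omega⟩, by simp; omega⟩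
      · rintro ⟨j, hj⟩
        omega
    rw [this, card_biUnion]
    · rw [hw]
      exact Finset.sum_congr rfl fun j _ => hC.2.1 x hx j
    · intro j1 _ j2 _ hne
      refine Finset.disjoint_left.2 ?_
      intro i h1 h2
      simp only [mem_filter] at h1 h2
      exact hne (Fin.ext (by omega))
  -- Step B
  have stepB : ∀ x ∈ C, ∀ y ∈ C, x ≠ y → Disjoint (Ex x) (Ex y) := by
    intro x hx y hy hxy
    refine Finset.disjoint_left.2 ?_
    intro E hEx hEy
    simp only [hExdef, mem_filter, mem_univ, true_and] at hEx hEy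
    set A : Finset (Fin n) := univ.image E with hAdef
    have hAcard : A.card = t := by
      rw [hAdef, Finset.card_image_of_injective _ E.injective, Finset.card_univ, hT]
    have hAx : A ⊆ univ.filter fun i => x i ≠ 0 := by
      intro i hi
      simp only [hAdef, mem_image, mem_univ, true_and] at hi
      obtain ⟨k, rfl⟩ := hi
      simp only [mem_filter, mem_univ, true_and]
      rw [hEx k]; omega
    have hAy : A ⊆ univ.filter fun i => y i ≠ 0 := by
      intro i hi
      simp only [hAdef, mem_image, mem_univ, true_and] at hi
      obtain ⟨k, rfl⟩ := hi
      simp only [mem_filter, mem_univ, true_and]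
      rw [hEy k]; omega
    have hsub : (univ.filter fun i => x i ≠ y i) ⊆
        ((univ.filter fun i => x i ≠ 0) \ A) ∪ ((univ.filter fun i => y i ≠ 0) \ A) := by
      intro i hi
      simp only [mem_filter, mem_univ, true_and] at hi
      have hiA : i ∉ A := by
        intro hiA
        simp only [hAdef, mem_image, mem_univ, true_and] at hiA
        obtain ⟨k, rfl⟩ := hiA
        exact hi (by rw [hEx k, hEy k])
      simp only [mem_union, mem_sdiff, mem_filter, mem_univ, true_and]
      rcases Nat.eq_zero_or_pos (x i) with h0 | h0
      · exact Or.inr ⟨by omega, hiA⟩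
      · exact Or.inl ⟨by omega, hiA⟩
    have hdist := hC.2.2 x hx y hy hxy
    have hham : hammingDist x y = (univ.filter fun i => x i ≠ y i).card := rfl
    have hle := Finset.card_le_card hsub
    have hcu := Finset.card_union_le ((univ.filter fun i => x i ≠ 0) \ A)
      ((univ.filter fun i => y i ≠ 0) \ A)
    have c1 : ((univ.filter fun i => x i ≠ 0) \ A).card = w - t := by
      rw [Finset.card_sdiff_of_subset hAx, suppcard x hx, hAcard]
    have c2 : ((univ.filter fun i => y i ≠ 0) \ A).card = w - t := by
      rw [Finset.card_sdiff_of_subset hAy, suppcard y hy, hAcard]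
    rw [hham] at hdist
    omega
  -- Step C
  calc C.card * ∏ j, (wb j).descFactorial (sb j)
      = ∑ _x ∈ C, ∏ j, (wb j).descFactorial (sb j) := by rw [Finset.sum_const, smul_eq_mul]
    _ ≤ ∑ x ∈ C, (Ex x).card := Finset.sum_le_sum stepA
    _ = (C.biUnion Ex).card := (Finset.card_biUnion stepB).symm
    _ ≤ (univ : Finset (T ↪ Fin n)).card := Finset.card_le_univ _
    _ = n.descFactorial t := by
        rw [Finset.card_univ, Fintype.card_embedding_eq, Fintype.card_fin, hT]

theorem stmt8 (q d w t : ℕ) (wb : Fin (q - 1) → ℕ) (hq : 2 ≤ q) (hodd : Odd d)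
    (hw : w = ∑ j, wb j) (hw1 : 1 ≤ w) (hd1 : 1 ≤ d) (hd2 : d ≤ 2 * w - 1)
    (ht : 2 * t = 2 * w - d + 1) :
    ∃ N : ℕ, ∀ n : ℕ, N ≤ n →
      (Aqc q n d wb : ℝ) ≤
        Mn q n w wb / ((Nat.choose (n - t) (w - t) : ℝ) * (fComp q wb (w - t) : ℝ)) := by
  classical
  have htw : t ≤ w := by omega
  have hlt : 2 * (w - t) < d := by omega
  -- choose an admissible tb attaining fComp
  set S := {m | ∃ tb : Fin (q - 1) → ℕ, (∑ j, tb j) = w - t ∧ (∀ j, tb j ≤ wb j) ∧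
    Nat.multinomial Finset.univ tb = m} with hSdef
  have hSne : S.Nonempty := by
    obtain ⟨tb, h1, h2⟩ := exists_comp' wb (w - t) (by omega)
    exact ⟨_, tb, h1, h2, rfl⟩
  have hSbdd : BddAbove S := by
    refine ⟨(w - t).factorial, ?_⟩
    rintro m ⟨tb, h1, h2, rfl⟩
    have hspec := Nat.multinomial_spec univ tb
    rw [h1] at hspec
    exact Nat.le_of_dvd (Nat.factorial_pos _)
      ⟨∏ i, (tb i).factorial, by rw [← hspec]; ring⟩
  have hfmem : fComp q wb (w - t) ∈ S := Nat.sSup_mem hSne hSbdd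
  obtain ⟨tb, htbsum, htble, htbmul⟩ := hfmem
  set sb : Fin (q - 1) → ℕ := fun j => wb j - tb j with hsbdef
  have hsble : ∀ j, sb j ≤ wb j := fun j => Nat.sub_le _ _
  have hsbsum : ∑ j, sb j = t := by
    have h1 : ∑ j, (sb j + tb j) = ∑ j, wb j :=
      Finset.sum_congr rfl (fun j _ => by simp only [hsbdef]; have := htble j; omega)
    rw [Finset.sum_add_distrib] at h1
    omega
  refine ⟨w, fun n hn => ?_⟩
  -- Aqc is attained
  set SA := {m | ∃ C : Finset (Fin n → ℕ), IsCCC q n d wb C ∧ C.card = m} with hSAdef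
  have hSAne : SA.Nonempty := by
    refine ⟨0, ∅, ⟨?_, ?_, ?_⟩, rfl⟩ <;> simp
  have hprodpos : 0 < ∏ j, (wb j).descFactorial (sb j) :=
    Finset.prod_pos fun j _ => descFactorial_pos' (hsble j)
  have hSAbdd : BddAbove SA := by
    refine ⟨n.descFactorial t, ?_⟩
    rintro m ⟨C, hC, rfl⟩
    calc C.card ≤ C.card * ∏ j, (wb j).descFactorial (sb j) :=
          Nat.le_mul_of_pos_right _ hprodpos
      _ ≤ n.descFactorial t := core d w t wb sb hw hsbsum hlt C hC
  have hAmem : Aqc q n d wb ∈ SA := Nat.sSup_mem hSAne hSAbdd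
  obtain ⟨C, hC, hCcard⟩ := hAmem
  have key := core d w t wb sb hw hsbsum hlt C hC
  -- factorial identities
  have e1 : ∀ j, (wb j).descFactorial (sb j) * (tb j).factorial = (wb j).factorial := by
    intro j
    rw [Nat.descFactorial_eq_factorial_mul_choose]
    have h1 : wb j - sb j = tb j := by
      have := htble j; simp only [hsbdef]; omega
    calc (sb j).factorial * (wb j).choose (sb j) * (tb j).factorial
        = (wb j).choose (sb j) * (sb j).factorial * (wb j - sb j).factorial := by
          rw [h1]; ring
      _ = (wb j).factorial := Nat.choose_mul_factorial_mul_factorial (hsble j)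
  have e2 : (∏ j, (wb j).descFactorial (sb j)) * ∏ j, (tb j).factorial
      = ∏ j, (wb j).factorial := by
    rw [← Finset.prod_mul_distrib]
    exact Finset.prod_congr rfl fun j _ => e1 j
  have e3 : (∏ j, (tb j).factorial) * Nat.multinomial univ tb = (w - t).factorial := by
    have h := Nat.multinomial_spec univ tb
    rw [htbsum] at h
    exact h
  have e4 : (n - t).choose (w - t) * (w - t).factorial * (n - w).factorial
      = (n - t).factorial := by
    have h1 : (n - t) - (w - t) = n - w := by omega
    have h := Nat.choose_mul_factorial_mul_factorial (show w - t ≤ n - t by omega)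
    rw [h1] at h
    exact h
  have e5 : n.descFactorial t * (n - t).factorial = n.factorial := by
    rw [Nat.descFactorial_eq_factorial_mul_choose]
    calc t.factorial * n.choose t * (n - t).factorial
        = n.choose t * t.factorial * (n - t).factorial := by ring
      _ = n.factorial := Nat.choose_mul_factorial_mul_factorial (by omega)
  have natineq : Aqc q n d wb *
      ((n - w).factorial * (∏ j, (wb j).factorial) *
        ((n - t).choose (w - t) * fComp q wb (w - t))) ≤ n.factorial := by
    rw [← htbmul, ← hCcard]
    calc C.card * ((n - w).factorial * (∏ j, (wb j).factorial) *
          ((n - t).choose (w - t) * Nat.multinomial univ tb))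
        = (C.card * ∏ j, (wb j).descFactorial (sb j)) * (n - t).factorial := by
          rw [← e2, ← e4, ← e3]; ring
      _ ≤ n.descFactorial t * (n - t).factorial := Nat.mul_le_mul_right _ key
      _ = n.factorial := e5
  -- real algebra
  have hchpos : (0 : ℝ) < ((n - t).choose (w - t) : ℝ) := by
    exact_mod_cast Nat.choose_pos (show w - t ≤ n - t by omega)
  have hfpos : (0 : ℝ) < (fComp q wb (w - t) : ℝ) := by
    rw [← htbmul]
    exact_mod_cast Nat.multinomial_pos _ _
  have hdenpos : (0 : ℝ) < ((n - w).factorial : ℝ) * ∏ j, ((wb j).factorial : ℝ) := by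
    have : (0 : ℝ) < ∏ j, ((wb j).factorial : ℝ) :=
      Finset.prod_pos fun j _ => by exact_mod_cast Nat.factorial_pos _
    have h2 : (0 : ℝ) < ((n - w).factorial : ℝ) := by exact_mod_cast Nat.factorial_pos _
    exact mul_pos h2 this
  rw [Mn, div_div, le_div_iff₀ (mul_pos hdenpos (mul_pos hchpos hfpos))]
  calc (Aqc q n d wb : ℝ) *
        (((n - w).factorial : ℝ) * (∏ j, ((wb j).factorial : ℝ)) *
          (((n - t).choose (w - t) : ℝ) * (fComp q wb (w - t) : ℝ)))
      = ((Aqc q n d wb *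
          ((n - w).factorial * (∏ j, (wb j).factorial) *
            ((n - t).choose (w - t) * fComp q wb (w - t)))) : ℕ) := by
        push_cast; ring
    _ ≤ (n.factorial : ℝ) := by exact_mod_cast natineq
end

section
/- Let q ≥ 2 and d be integers with d even, let w̄ = (w_1,...,w_{q-1}) be a composition with w = w_1+···+w_{q-1} ≥ 1 and 2 ≤ d ≤ 2w, and set t = (2w-d+2)/2 (so that t = ⌈(2w-d+1)/2⌉). Then for all sufficiently large integers n one has A_q(n,d,w̄) ≤ M(n)/(C(n-t,w-t)·f(w̄,w-t+1)), where M(n) = n!/((n-w)!·w_1!···w_{q-1}!) is the multinomial coefficient and C(a,b) denotes the binomial coefficient. -/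
/-! Double counting of flags. Fix `t̄ ≤ w̄` with `m = ∑ tⱼ`. A flag of a word `x` is an injective
placement of `m` slots (`tⱼ` of them labelled by the symbol `j`) onto positions where `x` carries
that symbol, together with one more position in the support of `x`. A word of composition `w̄` has
`∏ⱼ wⱼ^(tⱼ) · (w - m)` flags (falling factorials), and two words sharing a flag agree on `m`
positions and have at least `m + 1` common support positions, so they are at distance
`< 2 (w - m)`. Hence if `d ≥ 2 (w - m)` the flag sets of the codewords are disjoint, and
`|C| · ∏ⱼ wⱼ^(tⱼ) · (w - m) ≤ n^(m + 1)`. Taking `m = t - 1` and `t̄ = w̄ - s̄` for a vector `s̄`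
attaining `f(w̄, w - t + 1)` turns this into the stated bound. -/

open Finset

section

variable {γ β : Type*} {A : γ → Type*}

def embeddingSigmaEquiv (P : γ → β → Prop) (hP : ∀ c c' b, P c b → P c' b → c = c') :
    {e : (Σ c, A c) ↪ β // ∀ a, P a.1 (e a)} ≃ ∀ c, A c ↪ {b // P c b} where
  toFun e c := ⟨fun a => ⟨e.1 ⟨c, a⟩, e.2 ⟨c, a⟩⟩, fun a a' h => by
    simpa using e.1.injective (congrArg Subtype.val h)⟩
  invFun F := ⟨⟨fun a => F a.1 a.2, by
    rintro ⟨c, a⟩ ⟨c', a'⟩ h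
    dsimp only at h
    obtain rfl := hP c c' _ (F c a).2 (h ▸ (F c' a').2)
    exact congrArg _ ((F c).injective (Subtype.ext h))⟩, fun a => (F a.1 a.2).2⟩
  left_inv _ := rfl
  right_inv _ := rfl

theorem card_filter_embedding_sigma [Fintype γ] [DecidableEq γ] [∀ c, Fintype (A c)]
    [∀ c, DecidableEq (A c)] [Fintype β] [DecidableEq β] (P : γ → β → Prop)
    [∀ c, DecidablePred (P c)] (hP : ∀ c c' b, P c b → P c' b → c = c') :
    #{e : (Σ c, A c) ↪ β | ∀ a, P a.1 (e a)} =
      ∏ c, (#{b | P c b}).descFactorial (Fintype.card (A c)) := by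
  rw [← Fintype.card_subtype, Fintype.card_congr (embeddingSigmaEquiv P hP),
    Fintype.card_pi]
  simp only [Fintype.card_embedding_eq, Fintype.card_subtype]

end

theorem card_filter_forall_ne {α β : Type*} [Fintype α] [DecidableEq β] (e : α ↪ β)
    (s : Finset β) (h : ∀ a, e a ∈ s) :
    #{b ∈ s | ∀ a, e a ≠ b} = #s - Fintype.card α := by
  have : {b ∈ s | ∀ a, e a ≠ b} = s \ univ.map e := by
    ext b
    simp
  rw [this, card_sdiff_of_subset (by simpa [Finset.subset_iff] using h), card_map, card_univ]

theorem card_sigma_filter_forall_ne {α β : Type*} [Fintype α] [DecidableEq α] [Fintype β]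
    [DecidableEq β] :
    #(univ.sigma fun e : α ↪ β => {b | ∀ a, e a ≠ b}) =
      (Fintype.card β).descFactorial (Fintype.card α + 1) := by
  simp only [card_sigma, card_filter_forall_ne _ univ (fun _ => mem_univ _), card_univ,
    sum_const, smul_eq_mul, Fintype.card_embedding_eq, Nat.descFactorial_succ, mul_comm]

theorem hammingNorm_eq_sum_compOf {q n : ℕ} {x : Fin n → ℕ} (hx : ∀ i, x i < q) :
    hammingNorm x = ∑ j, compOf q n x j := by
  have hmaps : ∀ i ∈ ({i | x i ≠ 0} : Finset (Fin n)), x i - 1 ∈ range (q - 1) := fun i hi => by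
    have := hx i
    rw [mem_filter] at hi
    exact mem_range.2 (by omega)
  rw [hammingNorm, card_eq_sum_card_fiberwise hmaps, sum_range]
  refine sum_congr rfl fun j _ => ?_
  rw [compOf, filter_filter]
  exact congrArg card (filter_congr fun i _ => by omega)

theorem hammingDist_add_card_add_card_le {ι β : Type*} [Fintype ι] [DecidableEq β] [Zero β]
    (x y : ι → β) :
    hammingDist x y + #{i | x i = y i ∧ x i ≠ 0} + #{i | x i ≠ 0 ∧ y i ≠ 0} ≤
      hammingNorm x + hammingNorm y := by
  simp only [hammingDist, hammingNorm, card_filter, ← sum_add_distrib]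
  refine sum_le_sum fun i _ => ?_
  by_cases hx : x i = 0 <;> by_cases hy : y i = 0 <;> by_cases hxy : x i = y i <;>
    simp [hx, hy, hxy, eq_comm]

section Flags

variable {q n : ℕ} (tb : Fin (q - 1) → ℕ)

-- The slot `⟨j, k⟩` stands for the `k`-th prescribed occurrence of the symbol `j + 1`.
abbrev Slots : Type := Σ j : Fin (q - 1), Fin (tb j)

theorem card_slots : Fintype.card (Slots tb) = ∑ j, tb j := by
  simp [Fintype.card_sigma]

noncomputable def placements (x : Fin n → ℕ) : Finset (Slots tb ↪ Fin n) :=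
  {e | ∀ a, x (e a) = a.1 + 1}

noncomputable def flags (x : Fin n → ℕ) : Finset (Σ _ : Slots tb ↪ Fin n, Fin n) :=
  (placements tb x).sigma fun e => {i ∈ {i | x i ≠ 0} | ∀ a, e a ≠ i}

theorem card_placements {wb : Fin (q - 1) → ℕ} {x : Fin n → ℕ}
    (hx : ∀ j, compOf q n x j = wb j) :
    #(placements tb x) = ∏ j, (wb j).descFactorial (tb j) := by
  rw [placements, card_filter_embedding_sigma (A := fun j => Fin (tb j))
    (fun j i => x i = j + 1) fun j j' i hj hj' => Fin.ext (by omega)]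
  simp only [← hx, compOf, Fintype.card_fin]

theorem card_flags {wb : Fin (q - 1) → ℕ} {x : Fin n → ℕ} (hx : ∀ j, compOf q n x j = wb j) :
    #(flags tb x) = (∏ j, (wb j).descFactorial (tb j)) * (hammingNorm x - ∑ j, tb j) := by
  have hlast : ∀ e ∈ placements tb x,
      #{i ∈ {i | x i ≠ 0} | ∀ a, e a ≠ i} = hammingNorm x - ∑ j, tb j := fun e he => by
    have he : ∀ a, x (e a) = a.1 + 1 := (mem_filter.1 he).2
    rw [card_filter_forall_ne e _ fun a => by simp [he a], card_slots]
    rfl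
  rw [flags, card_sigma, sum_const_nat hlast, card_placements tb hx]

theorem disjoint_flags {w : ℕ} {x y : Fin n → ℕ} (hx : hammingNorm x = w)
    (hy : hammingNorm y = w) (hxy : 2 * (w - ∑ j, tb j) ≤ hammingDist x y) :
    Disjoint (flags tb x) (flags tb y) := by
  rw [disjoint_left]
  rintro ⟨e, i⟩ hex hey
  simp only [flags, placements, mem_sigma, mem_filter, mem_univ, true_and] at hex hey
  have hm : #(univ.map e) = ∑ j, tb j := by rw [card_map, card_univ, card_slots]
  have hi : i ∉ univ.map e := fun h => by
    obtain ⟨a, -, ha⟩ := mem_map.1 h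
    exact hex.2.2 a ha
  have hagree : ∑ j, tb j ≤ #{i | x i = y i ∧ x i ≠ 0} :=
    hm ▸ card_le_card fun _ h => by
      obtain ⟨a, -, rfl⟩ := mem_map.1 h
      simp [hex.1 a, hey.1 a]
  have hcommon : ∑ j, tb j + 1 ≤ #{i | x i ≠ 0 ∧ y i ≠ 0} := by
    rw [← hm, ← card_cons hi]
    refine card_le_card fun k hk => ?_
    rcases mem_cons.1 hk with rfl | hk
    · simp [hex.2.1, hey.2.1]
    · obtain ⟨a, -, rfl⟩ := mem_map.1 hk
      simp [hex.1 a, hey.1 a]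
  have := hammingDist_add_card_add_card_le x y
  omega

end Flags

theorem exists_le_sum_eq {ι : Type*} [Fintype ι] [DecidableEq ι] (b : ι → ℕ) {s : ℕ}
    (hs : s ≤ ∑ i, b i) : ∃ a ≤ b, ∑ i, a i = s := by
  induction s with
  | zero => exact ⟨0, fun _ => Nat.zero_le _, by simp⟩
  | succ s ih =>
    obtain ⟨a, hab, rfl⟩ := ih (by omega)
    obtain ⟨j, -, hj⟩ := exists_lt_of_sum_lt (s := univ) (by omega : ∑ i, a i < ∑ i, b i)
    refine ⟨a + Pi.single j 1, fun i => ?_, by simp [sum_add_distrib]⟩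
    rcases eq_or_ne i j with rfl | hij
    · simpa using hj
    · simpa [hij] using hab i

theorem multinomial_le_factorial_sum {ι : Type*} (s : Finset ι) (f : ι → ℕ) :
    Nat.multinomial s f ≤ (∑ i ∈ s, f i).factorial := by
  rw [← Nat.multinomial_spec]
  exact Nat.le_mul_of_pos_left _ (prod_pos fun i _ => Nat.factorial_pos _)

open scoped Nat in
theorem descFactorial_mul_choose_mul_multinomial {ι : Type*} [Fintype ι] {n w t : ℕ}
    {wb sb tb : ι → ℕ} (hwb : ∀ j, sb j + tb j = wb j) (hsb : ∑ j, sb j = w - t + 1)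
    (ht : t ≤ w) (hw : w ≤ n) :
    n.descFactorial t *
        ((n - w)! * (∏ j, (wb j)!) * ((n - t).choose (w - t) * Nat.multinomial univ sb)) =
      n ! * ((∏ j, (wb j).descFactorial (tb j)) * (w - t + 1)) := by
  have h1 : (n - t)! * n.descFactorial t = n ! := Nat.factorial_mul_descFactorial (ht.trans hw)
  have h2 : (n - t).choose (w - t) * (w - t)! * (n - w)! = (n - t)! := by
    have := Nat.choose_mul_factorial_mul_factorial (n := n - t) (k := w - t) (by omega)
    rwa [show n - t - (w - t) = n - w by omega] at this
  have h3 : (∏ j, (sb j)!) * Nat.multinomial univ sb = (w - t + 1)! := by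
    rw [Nat.multinomial_spec, hsb]
  have h4 : (w - t + 1)! = (w - t + 1) * (w - t)! := Nat.factorial_succ _
  have h5 : ∏ j, (wb j)! = (∏ j, (sb j)!) * ∏ j, (wb j).descFactorial (tb j) := by
    rw [← prod_mul_distrib]
    refine prod_congr rfl fun j _ => ?_
    rw [← Nat.factorial_mul_descFactorial (hwb j ▸ le_add_self), ← hwb j, add_tsub_cancel_right]
  set D := ∏ j, (wb j).descFactorial (tb j)
  -- substitute `h5`, `h3`, `h4`, `h2`, `h1` in turn into the left-hand side
  linear_combination
    n.descFactorial t * (n - w)! * (n - t).choose (w - t) * Nat.multinomial univ sb * h5 +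
    n.descFactorial t * (n - w)! * (n - t).choose (w - t) * D * (h3 + h4) +
    n.descFactorial t * D * (w - t + 1) * h2 + D * (w - t + 1) * h1

theorem IsCCC.card_mul_le_descFactorial {q n d : ℕ} {wb : Fin (q - 1) → ℕ} {C : Finset (Fin n → ℕ)}
    (hC : IsCCC q n d wb C) (tb : Fin (q - 1) → ℕ) (hd : 2 * (∑ j, wb j - ∑ j, tb j) ≤ d) :
    #C * ((∏ j, (wb j).descFactorial (tb j)) * (∑ j, wb j - ∑ j, tb j)) ≤
      n.descFactorial (∑ j, tb j + 1) := by
  obtain ⟨hq, hcomp, hdist⟩ := hC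
  have hnorm : ∀ x ∈ C, hammingNorm x = ∑ j, wb j := fun x hx => by
    rw [hammingNorm_eq_sum_compOf (hq x hx)]
    exact sum_congr rfl fun j _ => hcomp x hx j
  calc #C * _ = ∑ x ∈ C, #(flags tb x) :=
        (sum_const_nat fun x hx => by rw [card_flags tb (hcomp x hx), hnorm x hx]).symm
    _ = #(C.biUnion (flags tb)) := (card_biUnion fun x hx y hy hxy =>
        disjoint_flags tb (hnorm x hx) (hnorm y hy) (hd.trans (hdist x hx y hy hxy))).symm
    _ ≤ #(univ.sigma fun e : Slots tb ↪ Fin n => {i | ∀ a, e a ≠ i}) :=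
        card_le_card (biUnion_subset.2 fun x _ => by
          rw [flags]
          exact sigma_mono (subset_univ _) fun _ => filter_subset_filter _ (subset_univ _))
    _ = n.descFactorial (∑ j, tb j + 1) := by
        rw [card_sigma_filter_forall_ne, Fintype.card_fin, card_slots]

theorem Aqc_le_of_forall_card_le {q n d K : ℕ} {wb : Fin (q - 1) → ℕ}
    (h : ∀ C, IsCCC q n d wb C → #C ≤ K) : Aqc q n d wb ≤ K :=
  csSup_le ⟨0, ∅, by simp [IsCCC], rfl⟩ fun _ ⟨C, hC, hcard⟩ => hcard ▸ h C hC

theorem exists_multinomial_eq_fComp {q s : ℕ} {wb : Fin (q - 1) → ℕ} (hs : s ≤ ∑ j, wb j) :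
    ∃ sb ≤ wb, ∑ j, sb j = s ∧ Nat.multinomial univ sb = fComp q wb s := by
  obtain ⟨a, ha, hsum⟩ := exists_le_sum_eq wb hs
  obtain ⟨sb, hsum, hle, hmul⟩ := Nat.sSup_mem (s := {m | ∃ tb : Fin (q - 1) → ℕ,
      (∑ j, tb j) = s ∧ (∀ j, tb j ≤ wb j) ∧ Nat.multinomial univ tb = m}) ⟨_, a, hsum, ha, rfl⟩
    ⟨s.factorial, by rintro _ ⟨sb, rfl, -, rfl⟩; exact multinomial_le_factorial_sum _ _⟩
  exact ⟨sb, hle, hsum, hmul⟩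

theorem stmt9_general (q d w t : ℕ) (wb : Fin (q - 1) → ℕ) (heven : Even d)
    (hw : w = ∑ j, wb j) (hd1 : 2 ≤ d) (hd2 : d ≤ 2 * w)
    (ht : 2 * t = 2 * w - d + 2) :
    ∃ N : ℕ, ∀ n : ℕ, N ≤ n →
      (Aqc q n d wb : ℝ) ≤
        Mn q n w wb /
          ((Nat.choose (n - t) (w - t) : ℝ) * (fComp q wb (w - t + 1) : ℝ)) := by
  obtain ⟨δ, rfl⟩ := heven
  obtain ⟨sb, hsb, hsum, hmul⟩ := exists_multinomial_eq_fComp (q := q) (s := w - t + 1)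
    (wb := wb) (by omega)
  have htb : ∑ j, (wb j - sb j) = t - 1 := by
    rw [sum_tsub_distrib _ fun j _ => hsb j]
    omega
  have ht1 : 1 ≤ t := by omega
  set P := (∏ j, (wb j).descFactorial (wb j - sb j)) * (w - t + 1)
  have hP : 0 < P := Nat.mul_pos (prod_pos fun j _ => Nat.descFactorial_pos.2 (Nat.sub_le _ _))
    (Nat.succ_pos _)
  refine ⟨w, fun n hn => ?_⟩
  have hA : Aqc q n (δ + δ) wb ≤ n.descFactorial t / P := by
    refine Aqc_le_of_forall_card_le fun C hC => (Nat.le_div_iff_mul_le hP).2 ?_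
    have := hC.card_mul_le_descFactorial (fun j => wb j - sb j) (by omega)
    rwa [← hw, htb, Nat.sub_add_cancel ht1, show w - (t - 1) = w - t + 1 by omega] at this
  have hid := descFactorial_mul_choose_mul_multinomial (n := n) (tb := fun j => wb j - sb j)
    (fun j => Nat.add_sub_cancel' (hsb j)) hsum (by omega) hn
  have hch : 0 < (n - t).choose (w - t) := Nat.choose_pos (by omega)
  have hmn : 0 < Nat.multinomial univ sb := Nat.multinomial_pos _ _
  calc (Aqc q n (δ + δ) wb : ℝ) ≤ ((n.descFactorial t / P : ℕ) : ℝ) := by exact_mod_cast hA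
    _ ≤ n.descFactorial t / P := Nat.cast_div_le
    _ = _ := by
      rw [Mn, div_div, ← hmul, div_eq_div_iff (by positivity) (by positivity)]
      exact_mod_cast hid

theorem stmt9 (q d w t : ℕ) (wb : Fin (q - 1) → ℕ) (hq : 2 ≤ q) (heven : Even d)
    (hw : w = ∑ j, wb j) (hw1 : 1 ≤ w) (hd1 : 2 ≤ d) (hd2 : d ≤ 2 * w)
    (ht : 2 * t = 2 * w - d + 2) :
    ∃ N : ℕ, ∀ n : ℕ, N ≤ n →
      (Aqc q n d wb : ℝ) ≤
        Mn q n w wb /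
          ((Nat.choose (n - t) (w - t) : ℝ) * (fComp q wb (w - t + 1) : ℝ)) :=
  stmt9_general q d w t wb heven hw hd1 hd2 ht
end

section
/- Let q ≥ 2, n ≥ 1, w ≥ 1 and t ≥ 1 be integers with t ≤ w, let w̄ = (w_1,...,w_{q-1}) be a composition with w = w_1+···+w_{q-1}, and let C ⊆ Σ_q^n be a set of vectors each of composition w̄ such that for all distinct x, y ∈ C one has #{i : x_i = y_i and x_i ≠ 0} ≤ t − 1 and #{i : x_i ≠ 0 and y_i ≠ 0} ≤ t. Then C has minimum Hamming distance ≥ 2w − 2t + 1, i.e., C is an (n, 2w−2t+1, w̄)_q-CCC. -/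
open Finset

theorem stmt16 (q n w t : ℕ) (wb : Fin (q - 1) → ℕ) (hq : 2 ≤ q) (hn : 1 ≤ n)
    (hw1 : 1 ≤ w) (ht : 1 ≤ t) (htw : t ≤ w) (hw : w = ∑ j, wb j)
    (C : Finset (Fin n → ℕ))
    (halph : ∀ x ∈ C, ∀ i, x i < q) (hcomp : ∀ x ∈ C, ∀ j, compOf q n x j = wb j)
    (hint1 : ∀ x ∈ C, ∀ y ∈ C, x ≠ y →
      (univ.filter fun i => x i = y i ∧ x i ≠ 0).card ≤ t - 1)
    (hint2 : ∀ x ∈ C, ∀ y ∈ C, x ≠ y →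
      (univ.filter fun i => x i ≠ 0 ∧ y i ≠ 0).card ≤ t) :
    IsCCC q n (2 * w - 2 * t + 1) wb C := by

  refine ⟨halph, hcomp, ?_⟩
  intro x hx y hy hxy
  have hwt : ∀ z ∈ C, (univ.filter fun i => z i ≠ 0).card = w := by
    intro z hz
    have hsplit : (univ.filter fun i => z i ≠ 0) =
        univ.biUnion (fun j : Fin (q - 1) => univ.filter fun i => z i = (j : ℕ) + 1) := by
      ext i
      simp only [mem_filter, mem_univ, true_and, mem_biUnion]
      constructor
      · intro h
        have hlt := halph z hz i
        exact ⟨⟨z i - 1, by omega⟩, by simp; omega⟩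
      · rintro ⟨j, hj⟩; omega
    rw [hsplit, card_biUnion, hw]
    · exact Finset.sum_congr rfl fun j _ => hcomp z hz j
    · intro a _ b _ hab
      simp only [disjoint_left, mem_filter, mem_univ, true_and]
      intro i ha hb
      exact hab (Fin.ext (by omega))
  have hSx := hwt x hx
  have hSy := hwt y hy
  set Sx := univ.filter fun i => x i ≠ 0 with hSxdef
  set Sy := univ.filter fun i => y i ≠ 0 with hSydef
  set D := univ.filter fun i => x i ≠ y i with hDdef
  set E := univ.filter fun i => x i = y i ∧ x i ≠ 0 with hEdef
  have hunion : (Sx ∪ Sy).card + (Sx ∩ Sy).card = Sx.card + Sy.card :=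
    card_union_add_card_inter _ _
  have hAeq : Sx ∩ Sy = univ.filter fun i => x i ≠ 0 ∧ y i ≠ 0 := by
    ext i
    simp only [hSxdef, hSydef, mem_inter, mem_filter, mem_univ, true_and]
  have hA : (Sx ∩ Sy).card ≤ t := by rw [hAeq]; exact hint2 x hx y hy hxy
  have hE : E.card ≤ t - 1 := hint1 x hx y hy hxy
  have hsub : Sx ∪ Sy ⊆ D ∪ E := by
    intro i hi
    simp only [hSxdef, hSydef, hDdef, hEdef, mem_union, mem_filter, mem_univ, true_and] at hi ⊢
    rcases eq_or_ne (x i) (y i) with h | h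
    · right; exact ⟨h, by omega⟩
    · left; exact h
  have hle : (Sx ∪ Sy).card ≤ D.card + E.card :=
    le_trans (card_le_card hsub) (card_union_le _ _)
  have hdist : hammingDist x y = D.card := rfl
  rw [hdist]
  omega
end
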